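/- arXiv:1510.08479 — 5 statements merged into one kernel-verified Lean document; each statement's English description precedes it below -/
import Mathlib

section
/- Let φ : J → ℝ be differentiable with φ' ≠ 0, and let R : J → ℝ be differentiable. Define P₁ = R·sin(φ) − (cos(φ)/φ')·R' and P₂ = −R·cos(φ) − (sin(φ)/φ')·R'. If f, g : J → ℝ are differentiable with f' = cos(φ), g' = sin(φ), and P₁ = λ f and P₂ = μ g for constants λ, μ, then 2R' = (λ − μ)·sin(φ)·cos(φ). -/
/-- From the eigenvalue system P₁ = λf, P₂ = μg one derives 2R' = (λ−μ) sin φ cos φ. -/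
theorem stmt_4 (f g φ φ' R : ℝ → ℝ) (lam mu a b : ℝ) (J : Set ℝ) (hJ : J = Set.Ioo a b)
    (hφ : ∀ s ∈ J, HasDerivAt φ (φ' s) s) (hφ' : ∀ s ∈ J, φ' s ≠ 0)
    (hR : ∀ s ∈ J, DifferentiableAt ℝ R s)
    (hf : ∀ s ∈ J, HasDerivAt f (Real.cos (φ s)) s)
    (hg : ∀ s ∈ J, HasDerivAt g (Real.sin (φ s)) s)
    (hP1 : ∀ s ∈ J, R s * Real.sin (φ s) - (Real.cos (φ s) / φ' s) * deriv R s = lam * f s)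
    (hP2 : ∀ s ∈ J, -(R s * Real.cos (φ s)) - (Real.sin (φ s) / φ' s) * deriv R s = mu * g s) :
    ∀ s ∈ J, 2 * deriv R s = (lam - mu) * Real.sin (φ s) * Real.cos (φ s) := by
  intro s hs
  have hJopen : IsOpen J := by rw [hJ]; exact isOpen_Ioo
  -- Identity R = λ f sin φ − μ g cos φ on J
  have hid : ∀ t ∈ J, R t = lam * (f t * Real.sin (φ t)) - mu * (g t * Real.cos (φ t)) := by
    intro t ht
    have h1 := hP1 t ht
    have h2 := hP2 t ht
    have hp := Real.sin_sq_add_cos_sq (φ t)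
    linear_combination Real.sin (φ t) * h1 - Real.cos (φ t) * h2 - R t * hp
  -- Second relation at s : −R' = φ' (λ f cos φ + μ g sin φ)
  have h1 := hP1 s hs
  have h2 := hP2 s hs
  have hp := Real.sin_sq_add_cos_sq (φ s)
  have hφs := hφ' s hs
  have h3 : -(deriv R s) / φ' s = lam * f s * Real.cos (φ s) + mu * g s * Real.sin (φ s) := by
    linear_combination Real.cos (φ s) * h1 + Real.sin (φ s) * h2
      + (deriv R s / φ' s) * hp
  have key : -(deriv R s) = (lam * f s * Real.cos (φ s) + mu * g s * Real.sin (φ s)) * φ' s :=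
    (div_eq_iff hφs).mp h3
  -- Differentiate the identity
  have hsin : HasDerivAt (fun t => Real.sin (φ t)) (Real.cos (φ s) * φ' s) s :=
    (Real.hasDerivAt_sin (φ s)).comp s (hφ s hs)
  have hcos : HasDerivAt (fun t => Real.cos (φ t)) (-Real.sin (φ s) * φ' s) s :=
    (Real.hasDerivAt_cos (φ s)).comp s (hφ s hs)
  have hA : HasDerivAt (fun t => lam * (f t * Real.sin (φ t)))
      (lam * (Real.cos (φ s) * Real.sin (φ s) + f s * (Real.cos (φ s) * φ' s))) s :=
    ((hf s hs).mul hsin).const_mul lam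
  have hB : HasDerivAt (fun t => mu * (g t * Real.cos (φ t)))
      (mu * (Real.sin (φ s) * Real.cos (φ s) + g s * (-Real.sin (φ s) * φ' s))) s :=
    ((hg s hs).mul hcos).const_mul mu
  have hF := hA.sub hB
  have hEq : R =ᶠ[nhds s] fun t => lam * (f t * Real.sin (φ t)) - mu * (g t * Real.cos (φ t)) := by
    filter_upwards [hJopen.mem_nhds hs] with t ht using hid t ht
  have hRd : HasDerivAt R
      (lam * (Real.cos (φ s) * Real.sin (φ s) + f s * (Real.cos (φ s) * φ' s))
        - mu * (Real.sin (φ s) * Real.cos (φ s) + g s * (-Real.sin (φ s) * φ' s))) s :=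
    hF.congr_of_eventuallyEq hEq
  have hDeriv := hRd.deriv
  linear_combination hDeriv - key
end

section
/- Let φ, R, f, g : J → ℝ be differentiable on an open interval J with f' = cos ∘ φ, g' = sin ∘ φ, φ' nowhere zero, and suppose R = λ f·sin φ − λ g·cos φ and R' = −φ'·λ·(f·cos φ + g·sin φ) hold on J for a constant λ ≠ 0. Then f² + g² is constant on J. -/
/-!
Differentiating the formula for `R` gives `R' = λ φ' (f cos φ + g sin φ)`. Comparing with the
prescribed `R' = -λ φ' (f cos φ + g sin φ)` and using `λ φ' ≠ 0` forces `f cos φ + g sin φ = 0`,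
which is half the derivative of `f² + g²`; so `f² + g²` is constant on the interval.
-/

open Real

lemma hasDerivAt_sq_add_sq {f g : ℝ → ℝ} {f' g' s : ℝ} (hf : HasDerivAt f f' s)
    (hg : HasDerivAt g g' s) :
    HasDerivAt (fun x => f x ^ 2 + g x ^ 2) (2 * (f s * f' + g s * g')) s :=
  ((hf.pow 2).add (hg.pow 2)).congr_deriv (by ring)

/-- The terms `λ cos φ sin φ` coming from `f' = cos φ` and `g' = sin φ` cancel. -/
lemma hasDerivAt_mul_sin_sub_mul_cos {f g φ : ℝ → ℝ} {φ' s : ℝ} (lam : ℝ)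
    (hφ : HasDerivAt φ φ' s) (hf : HasDerivAt f (cos (φ s)) s)
    (hg : HasDerivAt g (sin (φ s)) s) :
    HasDerivAt (fun x => lam * f x * sin (φ x) - lam * g x * cos (φ x))
      (φ' * lam * (f s * cos (φ s) + g s * sin (φ s))) s :=
  (((hf.const_mul lam).mul hφ.sin).sub ((hg.const_mul lam).mul hφ.cos)).congr_deriv (by ring)

/-- Subcase Ib: equal nonzero eigenvalues force f² + g² constant on J. -/
theorem stmt_6 (f g φ φ' R : ℝ → ℝ) (lam a b : ℝ) (J : Set ℝ) (hJ : J = Set.Ioo a b)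
    (hlam : lam ≠ 0)
    (hφ : ∀ s ∈ J, HasDerivAt φ (φ' s) s) (hφ' : ∀ s ∈ J, φ' s ≠ 0)
    (hf : ∀ s ∈ J, HasDerivAt f (Real.cos (φ s)) s)
    (hg : ∀ s ∈ J, HasDerivAt g (Real.sin (φ s)) s)
    (hReq : ∀ s ∈ J, R s = lam * f s * Real.sin (φ s) - lam * g s * Real.cos (φ s))
    (hR' : ∀ s ∈ J,
      HasDerivAt R (-(φ' s) * lam * (f s * Real.cos (φ s) + g s * Real.sin (φ s))) s) :
    ∀ s ∈ J, ∀ t ∈ J, (f s) ^ 2 + (g s) ^ 2 = (f t) ^ 2 + (g t) ^ 2 := by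
  have hJopen : IsOpen J := hJ ▸ isOpen_Ioo
  have hsupport : ∀ s ∈ J, f s * cos (φ s) + g s * sin (φ s) = 0 := by
    intro s hs
    have hR : HasDerivAt R (φ' s * lam * (f s * cos (φ s) + g s * sin (φ s))) s :=
      (hasDerivAt_mul_sin_sub_mul_cos lam (hφ s hs) (hf s hs) (hg s hs)).congr_of_eventuallyEq
        (Filter.eventually_of_mem (hJopen.mem_nhds hs) hReq)
    have hR_eq := hR.unique (hR' s hs)
    exact mul_left_cancel₀ (mul_ne_zero (hφ' s hs) hlam) (by linarith)
  have hconst : ∀ s ∈ J, HasDerivAt (fun x => f x ^ 2 + g x ^ 2) 0 s := fun s hs => by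
    simpa [hsupport s hs] using hasDerivAt_sq_add_sq (hf s hs) (hg s hs)
  intro s hs t ht
  exact hJopen.is_const_of_deriv_eq_zero (hJ ▸ isPreconnected_Ioo)
    (fun x hx => (hconst x hx).differentiableAt.differentiableWithinAt)
    (fun x hx => (hconst x hx).deriv) hs ht
end

section
/- For real numbers λ ≠ μ and t = sin²φ ∈ (0,1), the resultant-type elimination of f and g from the two linear relations a f + b g = 0 and a₁ f/sin φ + b₁ g/cos φ = 0, where a = λ sin φ + (λ+μ)/((λ−μ) sin φ), b = 2μ/((λ−μ) cos φ) − μ cos φ, a₁ = λ(λ−μ)² t² + (λ−μ)(λμ − λ² + 3λ + μ) t − (λ+μ)(3λ−μ), b₁ = μ[(λ−μ)² t² + (λ−μ)(μ−λ+4) t − 2(λ+μ)], with (f,g) ≠ (0,0) and μ ≠ 0, implies λ(λ−μ)² t² + (λ−μ)(λμ − λ² + 5λ + μ − 2) t + (λ+μ)(μ − 3λ + 4) = 0. -/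
open Real

theorem mul_sub_mul_eq_zero_of_ne_zero_solution {R : Type*} [CommRing R] [NoZeroDivisors R]
    {a b c d x y : R} (h₁ : a * x + b * y = 0) (h₂ : c * x + d * y = 0)
    (hxy : (x, y) ≠ (0, 0)) : a * d - b * c = 0 := by
  by_contra hdet
  have hx : (a * d - b * c) * x = 0 := by linear_combination d * h₁ - b * h₂
  have hy : (a * d - b * c) * y = 0 := by linear_combination a * h₂ - c * h₁
  exact hxy (Prod.ext ((mul_eq_zero.mp hx).resolve_left hdet)
    ((mul_eq_zero.mp hy).resolve_left hdet))

theorem stmt_8_general (lam mu t ph f g : ℝ) (hne : lam ≠ mu) (hmu : mu ≠ 0)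
    (hsin : Real.sin ph ≠ 0) (hcos : Real.cos ph ≠ 0)
    (ht : t = Real.sin ph ^ 2)
    (hfg : (f, g) ≠ (0, 0))
    (h1 : (lam * Real.sin ph + (lam + mu) / ((lam - mu) * Real.sin ph)) * f +
          (2 * mu / ((lam - mu) * Real.cos ph) - mu * Real.cos ph) * g = 0)
    (h2 : (lam * (lam - mu) ^ 2 * t ^ 2 + (lam - mu) * (lam * mu - lam ^ 2 + 3 * lam + mu) * t
            - (lam + mu) * (3 * lam - mu)) * (f / Real.sin ph) +
          (mu * ((lam - mu) ^ 2 * t ^ 2 + (lam - mu) * (mu - lam + 4) * t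
            - 2 * (lam + mu))) * (g / Real.cos ph) = 0) :
    lam * (lam - mu) ^ 2 * t ^ 2 + (lam - mu) * (lam * mu - lam ^ 2 + 5 * lam + mu - 2) * t
      + (lam + mu) * (mu - 3 * lam + 4) = 0 := by
  have hlm : lam - mu ≠ 0 := sub_ne_zero.mpr hne
  have hcos_sq : cos ph ^ 2 = 1 - t := by rw [ht, ← cos_sq_add_sin_sq ph]; ring
  -- Both relations become a linear system in the unknowns f / sin φ and g / cos φ.
  have h1' : (lam * (lam - mu) * t + lam + mu) * (f / sin ph)
      + (2 * mu - mu * (lam - mu) * (1 - t)) * (g / cos ph) = 0 := by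
    rw [← hcos_sq, ht]
    field_simp at h1 ⊢
    linear_combination h1
  have hsol : (f / sin ph, g / cos ph) ≠ (0, 0) := by
    simpa [div_eq_zero_iff, hsin, hcos] using hfg
  have hdet := mul_sub_mul_eq_zero_of_ne_zero_solution h1' h2 hsol
  have hfactor : mu * (lam - mu) * (lam * (lam - mu) ^ 2 * t ^ 2
      + (lam - mu) * (lam * mu - lam ^ 2 + 5 * lam + mu - 2) * t
      + (lam + mu) * (mu - 3 * lam + 4)) = 0 := by
    linear_combination hdet
  exact (mul_eq_zero.mp hfactor).resolve_left (mul_ne_zero hmu hlm)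

/-- Elimination of (f,g) ≠ (0,0) from the homogeneous 2×2 linear system gives the
quadratic relation in t = sin²φ. -/
theorem stmt_8 (lam mu t ph f g : ℝ) (hne : lam ≠ mu) (hmu : mu ≠ 0)
    (hsin : Real.sin ph ≠ 0) (hcos : Real.cos ph ≠ 0)
    (ht : t = Real.sin ph ^ 2) (ht' : t ∈ Set.Ioo (0:ℝ) 1)
    (hfg : (f, g) ≠ (0, 0))
    (h1 : (lam * Real.sin ph + (lam + mu) / ((lam - mu) * Real.sin ph)) * f +
          (2 * mu / ((lam - mu) * Real.cos ph) - mu * Real.cos ph) * g = 0)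
    (h2 : (lam * (lam - mu) ^ 2 * t ^ 2 + (lam - mu) * (lam * mu - lam ^ 2 + 3 * lam + mu) * t
            - (lam + mu) * (3 * lam - mu)) * (f / Real.sin ph) +
          (mu * ((lam - mu) ^ 2 * t ^ 2 + (lam - mu) * (mu - lam + 4) * t
            - 2 * (lam + mu))) * (g / Real.cos ph) = 0) :
    lam * (lam - mu) ^ 2 * t ^ 2 + (lam - mu) * (lam * mu - lam ^ 2 + 5 * lam + mu - 2) * t
      + (lam + mu) * (mu - 3 * lam + 4) = 0 :=
  stmt_8_general lam mu t ph f g hne hmu hsin hcos ht hfg h1 h2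
end

section
/- There are no real numbers λ, μ with λ ≠ μ such that the quadratic t ↦ λ(λ−μ)² t² + (λ−μ)(λμ − λ² + 5λ + μ − 2) t + (λ+μ)(μ − 3λ + 4) vanishes identically in t. -/
/-!
If the quadratic vanishes identically, its three coefficients vanish. Since `λ ≠ μ`, the leading
coefficient forces `λ = 0`; the linear coefficient then becomes `-μ (μ - 2)`, so `μ = 2`, while the
constant term becomes `μ (μ + 4)`, which is `12 ≠ 0` at `μ = 2`.
-/

theorem coeffs_eq_zero_of_forall_quadratic_eq_zero {K : Type*} [Field K] [CharZero K]
    {a b c : K} (h : ∀ t : K, a * t ^ 2 + b * t + c = 0) : a = 0 ∧ b = 0 ∧ c = 0 := by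
  have hc : c = 0 := by simpa using h 0
  have h1 := h 1
  have hm1 := h (-1)
  have ha : a = 0 := by
    have h2a : 2 * a = 0 := by linear_combination h1 + hm1 - 2 * hc
    simpa using h2a
  refine ⟨ha, ?_, hc⟩
  linear_combination h1 - ha - hc

/-- No real λ ≠ μ make the Case II quadratic vanish identically in t. -/
theorem stmt_10 :
    ¬ ∃ (lam mu : ℝ), lam ≠ mu ∧ ∀ t : ℝ,
      lam * (lam - mu) ^ 2 * t ^ 2 + (lam - mu) * (lam * mu - lam ^ 2 + 5 * lam + mu - 2) * t
        + (lam + mu) * (mu - 3 * lam + 4) = 0 := by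
  rintro ⟨lam, mu, hne, h⟩
  obtain ⟨hlead, hlin, hconst⟩ := coeffs_eq_zero_of_forall_quadratic_eq_zero h
  have hsub : lam - mu ≠ 0 := sub_ne_zero.mpr hne
  have hlam : lam = 0 := by simpa [hsub] using hlead
  subst hlam
  have hmu : mu = 2 := by
    have hmu0 : mu ≠ 0 := by simpa using hne.symm
    have : mu - 2 = 0 := by simpa [hsub, hmu0] using hlin
    linarith
  subst hmu
  norm_num at hconst
end

section
/- Let S be a surface of revolution about the x₃-axis with arclength-parametrized profile curve (f(s), 0, g(s)), f > 0, f' = cos φ, g' = sin φ, φ' ≠ 0, sin φ ≠ 0 (no parabolic points). If there exist constants λ, μ with R sin φ − (cos φ/φ')R' = λ f and −R cos φ − (sin φ/φ')R' = μ g, where R = 1/φ' + f/sin φ, then either R ≡ 0 (so S is a minimal surface, hence a catenoid) or f² + g² is constant (so S is part of a sphere). -/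
/-!
In the moving frame of the profile curve, with tangent `(cos φ, sin φ)` and normal
`(sin φ, -cos φ)`, the eigen equations say that `R` is the normal component `B` of the
vector `(λ f, μ g)` and `-R' / φ'` its tangential component `A`. Differentiating `R = B` gives
`(λ - μ) cos φ sin φ + 2 φ' A = 0`, and together with the definition of `R` this eliminates the
curvature `φ'`: `2 A + (λ - μ) cos φ (B sin φ - f) = 0`.

If `λ = μ` this reads `λ (f f' + g g') = 0`, so either `R = B = 0` or `f² + g²` is constant.
If `λ ≠ μ`, differentiating the curvature-free relation and eliminating `φ'` once more leaves a
polynomial identity in `cos φ`. As `cos φ` has nonvanishing derivative `-φ' sin φ`, it is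
injective on the interval, so the polynomial vanishes identically, which forces `λ = μ = 0`.
-/

open Real Set Polynomial

theorem Set.OrdConnected.injOn_of_hasDerivAt_ne_zero {F F' : ℝ → ℝ} {J : Set ℝ}
    (hJ : J.OrdConnected) (hF : ∀ x ∈ J, HasDerivAt F (F' x) x) (hF' : ∀ x ∈ J, F' x ≠ 0) :
    InjOn F J := by
  have hne : ∀ x ∈ J, ∀ y ∈ J, x < y → F x ≠ F y := by
    intro x hx y hy hxy hFxy
    have hsub : Icc x y ⊆ J := hJ.out hx hy
    obtain ⟨z, hz, hz0⟩ := exists_hasDerivAt_eq_zero hxy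
      (fun u hu => (hF u (hsub hu)).continuousAt.continuousWithinAt) hFxy
      (fun u hu => hF u (hsub (Ioo_subset_Icc_self hu)))
    exact hF' z (hsub (Ioo_subset_Icc_self hz)) hz0
  intro x hx y hy hFxy
  by_contra hxy
  rcases lt_or_gt_of_ne hxy with h | h
  · exact hne x hx y hy h hFxy
  · exact hne y hy x hx h hFxy.symm

theorem Polynomial.eq_zero_of_injOn_of_eval_eq_zero {R α : Type*} [CommRing R] [IsDomain R]
    {P : R[X]} {F : α → R} {J : Set α} (hJ : J.Infinite) (hF : InjOn F J)
    (hP : ∀ x ∈ J, P.eval (F x) = 0) : P = 0 :=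
  P.eq_zero_of_infinite_isRoot <| (hJ.image hF).mono <| by
    rintro _ ⟨x, hx, rfl⟩
    exact hP x hx

theorem eigen_system_rotate {lam mu R R' p c s F G : ℝ} (hp : p ≠ 0) (pyth : s ^ 2 + c ^ 2 = 1)
    (h₁ : R * s - c / p * R' = lam * F) (h₂ : -(R * c) - s / p * R' = mu * G) :
    R = lam * F * s - mu * G * c ∧ R' = -(p * (lam * F * c + mu * G * s)) := by
  constructor
  · linear_combination s * h₁ - c * h₂ - R * pyth
  · field_simp at h₁ h₂
    linear_combination -(c * h₁) - s * h₂ - R' * pyth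

theorem eliminate_curvature {lam mu c s p f A B : ℝ} (hs : s ≠ 0)
    (hT : (lam - mu) * c * s + 2 * (p * A) = 0) (hN : p * (B * s - f) = s) :
    2 * A + (lam - mu) * c * (B * s - f) = 0 := by
  apply mul_left_cancel₀ hs
  linear_combination (B * s - f) * hT - 2 * A * hN

theorem cos_quartic_eq_zero {lam mu c s p f A B : ℝ} (hs : s ≠ 0) (pyth : s ^ 2 + c ^ 2 = 1)
    (hAB : A * c + B * s = lam * f)
    (hT : (lam - mu) * c * s + 2 * (p * A) = 0) (hN : p * (B * s - f) = s)
    (hE : 2 * (lam * c ^ 2 + mu * s ^ 2 - p * B) + (lam - mu) * (-(s * p) * (B * s - f)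
      + c * (((lam - mu) * c * s + p * A) * s + B * (c * p) - c)) = 0) :
    2 * (lam - 1) * (2 * mu - (lam - mu)) - 4 * lam
      + ((lam - 1) * (4 * (lam - mu) + (lam - mu) ^ 2) + 2 * (lam - mu) * (1 + lam)) * c ^ 2
      - lam * (lam - mu) ^ 2 * c ^ 4 = 0 := by
  -- `hE` is the relation of `eliminate_curvature` differentiated along the curve. Both `ha` and
  -- `hb` determine `p * B`; comparing them leaves the quartic in `c`.
  have ha : (lam - 1) * (p * B) = lam - (lam - mu) * c ^ 2 / 2 := by
    apply mul_left_cancel₀ hs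
    linear_combination lam * hN - p * hAB + c / 2 * hT
  have hb : (2 - (lam - mu) * c ^ 2) * (p * B)
      = 2 * lam * c ^ 2 + 2 * mu * s ^ 2 - (lam - mu) + (lam - mu) ^ 2 * c ^ 2 * s ^ 2 / 2 := by
    linear_combination -hE - (lam - mu) * s * hN + (lam - mu) * c * s / 2 * hT - (lam - mu) * pyth
  rw [show s ^ 2 = 1 - c ^ 2 by linear_combination pyth] at hb
  linear_combination 2 * (2 - (lam - mu) * c ^ 2) * ha - 2 * (lam - 1) * hb

section ProfileCurve

variable {f g φ φ' : ℝ → ℝ} {J : Set ℝ} {lam mu p t : ℝ}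

theorem Polynomial.eq_zero_of_eval_cos_comp_eq_zero (hJ : J.OrdConnected)
    (hJi : J.Infinite) (hφ : ∀ s ∈ J, HasDerivAt φ (φ' s) s) (hφ' : ∀ s ∈ J, φ' s ≠ 0)
    (hsin : ∀ s ∈ J, sin (φ s) ≠ 0) {P : ℝ[X]} (hP : ∀ s ∈ J, P.eval (cos (φ s)) = 0) :
    P = 0 :=
  eq_zero_of_injOn_of_eval_eq_zero hJi
    (hJ.injOn_of_hasDerivAt_ne_zero (fun s hs => (hφ s hs).cos) fun s hs =>
      mul_ne_zero (neg_ne_zero.mpr (hsin s hs)) (hφ' s hs)) hP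

theorem IsOpen.sq_add_sq_eq_of_mul_add_mul_eq_zero {f' g' : ℝ → ℝ} (hJo : IsOpen J)
    (hJc : IsPreconnected J) (hf : ∀ s ∈ J, HasDerivAt f (f' s) s)
    (hg : ∀ s ∈ J, HasDerivAt g (g' s) s) (h : ∀ s ∈ J, f s * f' s + g s * g' s = 0) :
    ∀ s ∈ J, ∀ t ∈ J, f s ^ 2 + g s ^ 2 = f t ^ 2 + g t ^ 2 := by
  have hd : ∀ s ∈ J, HasDerivAt (fun x => f x ^ 2 + g x ^ 2) 0 s := fun s hs =>
    (((hf s hs).pow 2).add ((hg s hs).pow 2)).congr_deriv (by linear_combination 2 * h s hs)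
  exact fun s hs t ht => hJo.is_const_of_deriv_eq_zero hJc
    (fun x hx => (hd x hx).differentiableAt.differentiableWithinAt)
    (fun x hx => (hd x hx).deriv) hs ht

noncomputable def tangentialPart (lam mu : ℝ) (f g φ : ℝ → ℝ) (s : ℝ) : ℝ :=
  lam * f s * cos (φ s) + mu * g s * sin (φ s)

noncomputable def normalPart (lam mu : ℝ) (f g φ : ℝ → ℝ) (s : ℝ) : ℝ :=
  lam * f s * sin (φ s) - mu * g s * cos (φ s)

theorem hasDerivAt_tangentialPart (hφ : HasDerivAt φ p t) (hf : HasDerivAt f (cos (φ t)) t)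
    (hg : HasDerivAt g (sin (φ t)) t) :
    HasDerivAt (tangentialPart lam mu f g φ)
      (lam * cos (φ t) ^ 2 + mu * sin (φ t) ^ 2 - p * normalPart lam mu f g φ t) t :=
  (((hf.const_mul lam).mul hφ.cos).add ((hg.const_mul mu).mul hφ.sin)).congr_deriv
    (by simp only [normalPart]; ring)

theorem hasDerivAt_normalPart (hφ : HasDerivAt φ p t) (hf : HasDerivAt f (cos (φ t)) t)
    (hg : HasDerivAt g (sin (φ t)) t) :
    HasDerivAt (normalPart lam mu f g φ)
      ((lam - mu) * cos (φ t) * sin (φ t) + p * tangentialPart lam mu f g φ t) t :=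
  (((hf.const_mul lam).mul hφ.sin).sub ((hg.const_mul mu).mul hφ.cos)).congr_deriv
    (by simp only [tangentialPart]; ring)

theorem curvature_relations_of_eigen {R : ℝ → ℝ} (hJo : IsOpen J)
    (hφ : ∀ s ∈ J, HasDerivAt φ (φ' s) s) (hφ' : ∀ s ∈ J, φ' s ≠ 0)
    (hsin : ∀ s ∈ J, sin (φ s) ≠ 0)
    (hf : ∀ s ∈ J, HasDerivAt f (cos (φ s)) s) (hg : ∀ s ∈ J, HasDerivAt g (sin (φ s)) s)
    (hRdef : ∀ s ∈ J, R s = 1 / φ' s + f s / sin (φ s))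
    (heig : ∀ s ∈ J, R s * sin (φ s) - (cos (φ s) / φ' s) * deriv R s = lam * f s ∧
      -(R s * cos (φ s)) - (sin (φ s) / φ' s) * deriv R s = mu * g s) :
    (∀ s ∈ J, R s = normalPart lam mu f g φ s) ∧
    (∀ s ∈ J,
      (lam - mu) * cos (φ s) * sin (φ s) + 2 * (φ' s * tangentialPart lam mu f g φ s) = 0) ∧
    (∀ s ∈ J, φ' s * (normalPart lam mu f g φ s * sin (φ s) - f s) = sin (φ s)) := by
  have hRN : ∀ s ∈ J, R s = normalPart lam mu f g φ s ∧
      deriv R s = -(φ' s * tangentialPart lam mu f g φ s) := fun s hs =>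
    eigen_system_rotate (hφ' s hs) (sin_sq_add_cos_sq _) (heig s hs).1 (heig s hs).2
  refine ⟨fun s hs => (hRN s hs).1, fun s hs => ?_, fun s hs => ?_⟩
  · have hR := (hasDerivAt_normalPart (lam := lam) (mu := mu) (hφ s hs) (hf s hs)
      (hg s hs)).congr_of_eventuallyEq
        (Filter.eventually_of_mem (hJo.mem_nhds hs) fun x hx => (hRN x hx).1)
    linear_combination (hRN s hs).2 - hR.deriv
  · have h := hRdef s hs
    rw [(hRN s hs).1] at h
    field_simp [hφ' s hs, hsin s hs] at h
    linear_combination h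

theorem lam_eq_mu_of_curvature_relations (hJ : J.OrdConnected) (hJo : IsOpen J)
    (hJi : J.Infinite) (hφ : ∀ s ∈ J, HasDerivAt φ (φ' s) s) (hφ' : ∀ s ∈ J, φ' s ≠ 0)
    (hsin : ∀ s ∈ J, sin (φ s) ≠ 0)
    (hf : ∀ s ∈ J, HasDerivAt f (cos (φ s)) s) (hg : ∀ s ∈ J, HasDerivAt g (sin (φ s)) s)
    (hT : ∀ s ∈ J,
      (lam - mu) * cos (φ s) * sin (φ s) + 2 * (φ' s * tangentialPart lam mu f g φ s) = 0)
    (hN : ∀ s ∈ J, φ' s * (normalPart lam mu f g φ s * sin (φ s) - f s) = sin (φ s)) :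
    lam = mu := by
  have hE : ∀ s ∈ J, 2 * tangentialPart lam mu f g φ s
      + (lam - mu) * cos (φ s) * (normalPart lam mu f g φ s * sin (φ s) - f s) = 0 :=
    fun s hs => eliminate_curvature (hsin s hs) (hT s hs) (hN s hs)
  have hquartic : ∀ s ∈ J, 2 * (lam - 1) * (2 * mu - (lam - mu)) - 4 * lam
      + ((lam - 1) * (4 * (lam - mu) + (lam - mu) ^ 2) + 2 * (lam - mu) * (1 + lam))
        * cos (φ s) ^ 2 - lam * (lam - mu) ^ 2 * cos (φ s) ^ 4 = 0 := by
    intro s hs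
    have hderiv := ((hasDerivAt_tangentialPart (lam := lam) (mu := mu) (hφ s hs) (hf s hs)
      (hg s hs)).const_mul 2).add (((hφ s hs).cos.const_mul (lam - mu)).mul
        (((hasDerivAt_normalPart (lam := lam) (mu := mu) (hφ s hs) (hf s hs)
          (hg s hs)).mul (hφ s hs).sin).sub (hf s hs)))
    have hE' := hderiv.unique ((hasDerivAt_const s (0 : ℝ)).congr_of_eventuallyEq
      (Filter.eventually_of_mem (hJo.mem_nhds hs) hE))
    simp only [Pi.sub_apply, Pi.mul_apply] at hE'
    exact cos_quartic_eq_zero (hsin s hs) (sin_sq_add_cos_sq _)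
      (by
        simp only [tangentialPart, normalPart]
        linear_combination lam * f s * sin_sq_add_cos_sq (φ s))
      (hT s hs) (hN s hs) (by linear_combination hE')
  set P : ℝ[X] := C (2 * (lam - 1) * (2 * mu - (lam - mu)) - 4 * lam)
    + C ((lam - 1) * (4 * (lam - mu) + (lam - mu) ^ 2) + 2 * (lam - mu) * (1 + lam)) * X ^ 2
    - C (lam * (lam - mu) ^ 2) * X ^ 4
  have hP : P = 0 := eq_zero_of_eval_cos_comp_eq_zero hJ hJi hφ hφ' hsin fun s hs => by
    simpa [P] using hquartic s hs
  have h₀ : 2 * (lam - 1) * (2 * mu - (lam - mu)) - 4 * lam = 0 := by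
    have h := congrArg (coeff · 0) hP
    simp only [P, coeff_add, coeff_sub, coeff_C_mul_X_pow, coeff_C, coeff_zero] at h
    simpa using h
  have h₄ : lam * (lam - mu) ^ 2 = 0 := by
    have h := congrArg (coeff · 4) hP
    simp only [P, coeff_add, coeff_sub, coeff_C_mul_X_pow, coeff_C, coeff_zero] at h
    simpa using h
  by_contra hne
  have hlam : lam = 0 := by simpa [sub_eq_zero, hne] using h₄
  have hmu : mu = 0 := by subst hlam; linarith
  exact hne (hlam.trans hmu.symm)

end ProfileCurve

theorem stmt_19_general (f g φ φ' R : ℝ → ℝ) (a b : ℝ) (J : Set ℝ) (hJ : J = Set.Ioo a b)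
    (hφ : ∀ s ∈ J, HasDerivAt φ (φ' s) s) (hφ' : ∀ s ∈ J, φ' s ≠ 0)
    (hsin : ∀ s ∈ J, Real.sin (φ s) ≠ 0)
    (hf : ∀ s ∈ J, HasDerivAt f (Real.cos (φ s)) s)
    (hg : ∀ s ∈ J, HasDerivAt g (Real.sin (φ s)) s)
    (hRdef : ∀ s ∈ J, R s = 1 / φ' s + f s / Real.sin (φ s))
    (heig : ∃ lam mu : ℝ, ∀ s ∈ J,
      R s * Real.sin (φ s) - (Real.cos (φ s) / φ' s) * deriv R s = lam * f s ∧
      -(R s * Real.cos (φ s)) - (Real.sin (φ s) / φ' s) * deriv R s = mu * g s) :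
    (∀ s ∈ J, R s = 0) ∨
    (∀ s ∈ J, ∀ t ∈ J, (f s) ^ 2 + (g s) ^ 2 = (f t) ^ 2 + (g t) ^ 2) := by
  obtain ⟨lam, mu, heig⟩ := heig
  subst hJ
  obtain ⟨hRN, hT, hN⟩ :=
    curvature_relations_of_eigen isOpen_Ioo hφ hφ' hsin hf hg hRdef heig
  rcases (Ioo a b).eq_empty_or_nonempty with hJe | ⟨t, ht⟩
  · simp [hJe]
  obtain rfl : lam = mu := lam_eq_mu_of_curvature_relations ordConnected_Ioo isOpen_Ioo
    (Ioo_infinite (nonempty_Ioo.mp ⟨t, ht⟩)) hφ hφ' hsin hf hg hT hN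
  by_cases hlam : lam = 0
  · left
    intro s hs
    simp [hRN s hs, normalPart, hlam]
  · right
    refine isOpen_Ioo.sq_add_sq_eq_of_mul_add_mul_eq_zero isPreconnected_Ioo hf hg fun s hs => ?_
    have h : φ' s * lam * (f s * cos (φ s) + g s * sin (φ s)) = 0 := by
      have := hT s hs
      simp only [tangentialPart] at this
      linear_combination this / 2
    simpa [hφ' s hs, hlam] using h

/-- Main theorem (analytic form): a surface of revolution whose profile curve satisfies
the eigenvalue system P₁ = λf, P₂ = μg with R = 1/φ' + f/sin φ is a catenoid (R ≡ 0)
or part of a sphere (f² + g² constant). -/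
theorem stmt_19 (f g φ φ' R : ℝ → ℝ) (a b : ℝ) (J : Set ℝ) (hJ : J = Set.Ioo a b)
    (hφ : ∀ s ∈ J, HasDerivAt φ (φ' s) s) (hφ' : ∀ s ∈ J, φ' s ≠ 0)
    (hsin : ∀ s ∈ J, Real.sin (φ s) ≠ 0)
    (hfpos : ∀ s ∈ J, 0 < f s)
    (hf : ∀ s ∈ J, HasDerivAt f (Real.cos (φ s)) s)
    (hg : ∀ s ∈ J, HasDerivAt g (Real.sin (φ s)) s)
    (hRdef : ∀ s ∈ J, R s = 1 / φ' s + f s / Real.sin (φ s))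
    (hRdiff : ∀ s ∈ J, DifferentiableAt ℝ R s)
    (heig : ∃ lam mu : ℝ, ∀ s ∈ J,
      R s * Real.sin (φ s) - (Real.cos (φ s) / φ' s) * deriv R s = lam * f s ∧
      -(R s * Real.cos (φ s)) - (Real.sin (φ s) / φ' s) * deriv R s = mu * g s) :
    (∀ s ∈ J, R s = 0) ∨
    (∀ s ∈ J, ∀ t ∈ J, (f s) ^ 2 + (g s) ^ 2 = (f t) ^ 2 + (g t) ^ 2) :=
  stmt_19_general f g φ φ' R a b J hJ hφ hφ' hsin hf hg hRdef heig
end
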